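/- Let H and H' be real Hilbert spaces, K : H → H' a bounded linear operator with operator norm strictly less than 1, g ∈ H', p ∈ [1,2], (φ_γ)_{γ∈Γ} an orthonormal basis of H, and w = (w_γ)_{γ∈Γ} a sequence of weights with w_γ ≥ c for some constant c > 0. Let f⁰ ∈ H and define fⁿ = S_{w,p}(fⁿ⁻¹ + K*(g − K fⁿ⁻¹)) for n ≥ 1. Then the norms ‖fⁿ‖ are bounded uniformly in n; in fact ‖fⁿ‖² ≤ c^{−2/p} (Φ_{w,p}(f⁰))^{2/p}, where Φ_{w,p}(f) = ‖Kf − g‖² + Σ_{γ∈Γ} w_γ |⟨f,φ_γ⟩|^p. -/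

import Mathlib

open scoped ENNReal
open Filter

noncomputable def scalarF (w p : ℝ) (x : ℝ) : ℝ :=
  x + w * p / 2 * (Real.sign x * |x| ^ (p - 1))

noncomputable def scalarS (w p : ℝ) : ℝ → ℝ :=
  if p = 1 then
    fun x => if w / 2 ≤ x then x - w / 2 else if x ≤ -(w / 2) then x + w / 2 else 0
  else Function.invFun (scalarF w p)

-- tangent line inequality for |·|^p
lemma rpow_tangent_nonneg {p s t : ℝ} (hp : 1 ≤ p) (hs : 0 < s) (ht : 0 ≤ t) :
    s ^ p + p * s ^ (p - 1) * (t - s) ≤ t ^ p := by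
  have hb := one_add_mul_self_le_rpow_one_add (s := (t - s) / s)
    (by rw [neg_le, ← neg_div, div_le_one hs]; nlinarith) hp
  have h1 : (1 + (t - s) / s) = t / s := by field_simp; ring
  rw [h1, Real.div_rpow ht hs.le] at hb
  have h2 : s ^ (p - 1) = s ^ p / s := by
    rw [Real.rpow_sub hs, Real.rpow_one]
  have hsp : 0 < s ^ p := Real.rpow_pos_of_pos hs p
  have h2' : s ^ (p-1) * s = s ^ p := by rw [h2]; field_simp
  have hb2 : (1 + p * ((t - s) / s)) * s ^ p ≤ t ^ p / s ^ p * s ^ p :=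
    mul_le_mul_of_nonneg_right hb hsp.le
  rw [div_mul_cancel₀ _ hsp.ne'] at hb2
  calc s ^ p + p * s ^ (p - 1) * (t - s)
      = (1 + p * ((t - s) / s)) * s ^ p := by
        have e1 : (1 + p * ((t - s) / s)) * s ^ p = s ^ p + p * (t - s) * (s ^ p / s) := by
          ring
        rw [e1, ← h2]; ring
    _ ≤ t ^ p := hb2

lemma abs_rpow_tangent {p : ℝ} (hp : 1 ≤ p) (s x : ℝ) :
    p * Real.sign s * |s| ^ (p - 1) * (x - s) ≤ |x| ^ p - |s| ^ p := by
  rcases lt_trichotomy s 0 with h | h | h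
  · have key := rpow_tangent_nonneg hp (s := -s) (t := |x|) (by linarith) (abs_nonneg x)
    rw [Real.sign_of_neg h, abs_of_neg h]
    have h2 : -x ≤ |x| := neg_le_abs x
    have h3 : (0:ℝ) ≤ (-s) ^ (p - 1) := Real.rpow_nonneg (by linarith) _
    nlinarith [mul_nonneg (mul_nonneg (by linarith : (0:ℝ) ≤ p) h3) (sub_nonneg.2 h2)]
  · subst h
    simp only [Real.sign_zero, mul_zero, zero_mul, abs_zero]
    rw [Real.zero_rpow (by linarith : p ≠ 0)]
    simpa using Real.rpow_nonneg (abs_nonneg x) p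
  · have key := rpow_tangent_nonneg hp (s := s) (t := |x|) h (abs_nonneg x)
    rw [Real.sign_of_pos h, abs_of_pos h]
    have h2 : x ≤ |x| := le_abs_self x
    have h3 : (0:ℝ) ≤ s ^ (p - 1) := Real.rpow_nonneg h.le _
    nlinarith [mul_nonneg (mul_nonneg (by linarith : (0:ℝ) ≤ p) h3) (sub_nonneg.2 h2)]

lemma signG_nonneg {p x : ℝ} (hx : 0 ≤ x) : 0 ≤ Real.sign x * |x| ^ (p - 1) := by
  rcases eq_or_lt_of_le hx with h | h
  · simp [← h]
  · rw [Real.sign_of_pos h]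
    positivity

lemma signG_mono {p : ℝ} (hp : 1 ≤ p) :
    Monotone (fun x : ℝ => Real.sign x * |x| ^ (p - 1)) := by
  intro x y hxy
  dsimp only
  rcases le_or_gt 0 x with hx | hx
  · rcases eq_or_lt_of_le hx with h | h
    · simp only [← h, Real.sign_zero, zero_mul]
      exact signG_nonneg (le_trans hx hxy)
    · rw [Real.sign_of_pos h, Real.sign_of_pos (lt_of_lt_of_le h hxy), one_mul, one_mul,
        abs_of_pos h, abs_of_pos (lt_of_lt_of_le h hxy)]
      exact Real.rpow_le_rpow h.le hxy (by linarith)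
  · rcases le_or_gt 0 y with hy | hy
    · have hx0 : Real.sign x * |x| ^ (p-1) ≤ 0 := by
        rw [Real.sign_of_neg hx]
        nlinarith [Real.rpow_nonneg (abs_nonneg x) (p-1)]
      exact le_trans hx0 (signG_nonneg hy)
    · rw [Real.sign_of_neg hx, Real.sign_of_neg hy, abs_of_neg hx, abs_of_neg hy]
      have : (-y) ^ (p-1) ≤ (-x) ^ (p-1) :=
        Real.rpow_le_rpow (by linarith) (by linarith) (by linarith)
      nlinarith

lemma scalarF_strictMono {w p : ℝ} (hw : 0 ≤ w) (hp : 1 ≤ p) :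
    StrictMono (scalarF w p) := by
  intro x y hxy
  have h1 := signG_mono hp hxy.le
  have h2 : 0 ≤ w * p / 2 := by positivity
  simp only [scalarF]
  nlinarith [mul_le_mul_of_nonneg_left h1 h2]

lemma signG_cont {p : ℝ} (hp : 1 < p) :
    Continuous (fun x : ℝ => Real.sign x * |x| ^ (p - 1)) := by
  rw [continuous_iff_continuousAt]
  intro x
  rcases lt_trichotomy x 0 with hx | hx | hx
  · have hev : (fun y : ℝ => Real.sign y * |y| ^ (p - 1)) =ᶠ[nhds x]
        fun y : ℝ => -((-y) ^ (p - 1)) := by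
      filter_upwards [isOpen_Iio.mem_nhds (show x ∈ Set.Iio 0 from hx)] with y hy
      rw [Real.sign_of_neg hy, abs_of_neg hy]; ring
    refine ContinuousAt.congr ?_ hev.symm
    exact (((Real.continuousAt_rpow_const (-x) (p-1)
      (Or.inl (by simpa using hx.ne))).comp continuous_neg.continuousAt)).neg
  · subst hx
    have h0 : Real.sign (0:ℝ) * |(0:ℝ)| ^ (p - 1) = 0 := by simp
    rw [ContinuousAt, h0]
    apply squeeze_zero_norm (a := fun y : ℝ => |y| ^ (p - 1))
    · intro y
      have h1 : |Real.sign y| ≤ 1 := by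
        rcases lt_trichotomy y 0 with h | h | h
        · rw [Real.sign_of_neg h]; norm_num
        · simp [h]
        · rw [Real.sign_of_pos h]; norm_num
      have h2 : (0:ℝ) ≤ |y| ^ (p-1) := Real.rpow_nonneg (abs_nonneg y) _
      calc ‖Real.sign y * |y| ^ (p - 1)‖ = |Real.sign y| * |y| ^ (p-1) := by
            rw [Real.norm_eq_abs, abs_mul, abs_of_nonneg h2]
        _ ≤ 1 * |y| ^ (p-1) := mul_le_mul_of_nonneg_right h1 h2
        _ = |y| ^ (p-1) := one_mul _
    · have : ContinuousAt (fun y : ℝ => |y| ^ (p - 1)) 0 :=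
        (Real.continuousAt_rpow_const (|(0:ℝ)|) (p-1)
          (Or.inr (by linarith))).comp continuous_abs.continuousAt
      have h3 : |(0:ℝ)| ^ (p - 1) = 0 := by
        rw [abs_zero, Real.zero_rpow (by linarith : p - 1 ≠ 0)]
      rw [ContinuousAt, h3] at this
      exact this
  · have hev : (fun y : ℝ => Real.sign y * |y| ^ (p - 1)) =ᶠ[nhds x]
        fun y : ℝ => y ^ (p - 1) := by
      filter_upwards [isOpen_Ioi.mem_nhds (show x ∈ Set.Ioi 0 from hx)] with y hy
      rw [Real.sign_of_pos hy, abs_of_pos hy, one_mul]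
    refine ContinuousAt.congr ?_ hev.symm
    exact Real.continuousAt_rpow_const x (p-1) (Or.inl hx.ne')

lemma scalarF_surj {w p : ℝ} (hw : 0 ≤ w) (hp : 1 < p) :
    Function.Surjective (scalarF w p) := by
  intro h
  have hcont : Continuous (scalarF w p) := by
    unfold scalarF
    exact continuous_id.add (continuous_const.mul (signG_cont hp))
  have hC : 0 ≤ w * p / 2 := by positivity
  have h1 : scalarF w p (-|h|) ≤ h := by
    have := signG_nonneg (p := p) (x := |h|) (abs_nonneg h)
    have hG : Real.sign (-|h|) * |(-|h|)| ^ (p - 1) ≤ 0 := by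
      rcases eq_or_lt_of_le (abs_nonneg h) with h0 | h0
      · simp [← h0]
      · rw [Real.sign_of_neg (by linarith), abs_neg, abs_abs]
        nlinarith [Real.rpow_nonneg (abs_nonneg h) (p-1)]
    have := neg_abs_le h
    unfold scalarF
    nlinarith [mul_nonneg hC (neg_nonneg.2 hG)]
  have h2 : h ≤ scalarF w p |h| := by
    have hG := signG_nonneg (p := p) (x := |h|) (abs_nonneg h)
    have := le_abs_self h
    unfold scalarF
    nlinarith [mul_nonneg hC hG]
  have := intermediate_value_Icc (neg_le_self (abs_nonneg h)) hcont.continuousOn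
  obtain ⟨s, _, hs⟩ := this ⟨h1, h2⟩
  exact ⟨s, hs⟩

lemma scalarF_scalarS {w p : ℝ} (hw : 0 ≤ w) (hp : 1 < p) (h : ℝ) :
    scalarF w p (scalarS w p h) = h := by
  unfold scalarS
  rw [if_neg (by linarith)]
  exact Function.invFun_eq (scalarF_surj hw hp h)

lemma scalarS_abs_le {w p : ℝ} (hw : 0 ≤ w) (hp : 1 ≤ p) (h : ℝ) :
    |scalarS w p h| ≤ |h| := by
  rcases eq_or_lt_of_le hp with hp1 | hp1
  · rw [scalarS, if_pos hp1.symm]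
    split_ifs with h1 h2
    · rw [abs_of_nonneg (by linarith), abs_of_nonneg (by linarith)]; linarith
    · rw [abs_of_nonpos (by linarith), abs_of_nonpos (by linarith)]; linarith
    · simp
  · set s := scalarS w p h with hs
    have hF : s + w * p / 2 * (Real.sign s * |s| ^ (p - 1)) = h := scalarF_scalarS hw hp1 h
    have hC : 0 ≤ w * p / 2 := by positivity
    rcases le_or_gt 0 s with h0 | h0
    · have hG := signG_nonneg (p := p) h0
      rw [abs_of_nonneg h0, abs_of_nonneg (by nlinarith [mul_nonneg hC hG])]
      nlinarith [mul_nonneg hC hG]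
    · have hG : Real.sign s * |s| ^ (p - 1) ≤ 0 := by
        rw [Real.sign_of_neg h0]
        nlinarith [Real.rpow_nonneg (abs_nonneg s) (p-1)]
      have h2 : 0 ≤ w * p / 2 * (-(Real.sign s * |s| ^ (p - 1))) :=
        mul_nonneg hC (by linarith)
      rw [abs_of_neg h0, abs_of_nonpos (by nlinarith)]
      nlinarith

lemma scalarS_min {w p : ℝ} (hw : 0 ≤ w) (hp : 1 ≤ p) (h x : ℝ) :
    (scalarS w p h) ^ 2 - 2 * (scalarS w p h) * h + w * |scalarS w p h| ^ p ≤
      x ^ 2 - 2 * x * h + w * |x| ^ p := by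
  rcases eq_or_lt_of_le hp with hp1 | hp1
  · subst hp1
    simp only [Real.rpow_one]
    rw [scalarS, if_pos rfl]
    split_ifs with h1 h2
    · rw [abs_of_nonneg (by linarith : (0:ℝ) ≤ h - w/2)]
      rcases abs_cases x with ⟨hx, hx'⟩ | ⟨hx, hx'⟩ <;> rw [hx] <;>
        nlinarith [sq_nonneg (x - (h - w/2)), sq_nonneg x, sq_nonneg (h - w/2)]
    · rw [abs_of_nonpos (by linarith : h + w/2 ≤ 0)]
      rcases abs_cases x with ⟨hx, hx'⟩ | ⟨hx, hx'⟩ <;> rw [hx] <;>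
        nlinarith [sq_nonneg (x - (h + w/2)), sq_nonneg x, sq_nonneg (h + w/2)]
    · push_neg at h1
      simp only [abs_zero, ne_eq, OfNat.ofNat_ne_zero, not_false_eq_true, zero_pow,
        mul_zero, zero_mul, sub_zero, mul_zero, add_zero]
      rcases abs_cases x with ⟨hx, hx'⟩ | ⟨hx, hx'⟩ <;> rw [hx] <;> nlinarith
  · set s := scalarS w p h with hs
    have hF : s + w * p / 2 * (Real.sign s * |s| ^ (p - 1)) = h := scalarF_scalarS hw hp1 h
    have htan := abs_rpow_tangent hp s x
    have htan2 := mul_le_mul_of_nonneg_left htan hw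
    rw [← hF]
    nlinarith [htan2, sq_nonneg (x - s)]

noncomputable def shrinkOp {H : Type*} [NormedAddCommGroup H] [InnerProductSpace ℝ H]
    {Γ : Type*} (b : HilbertBasis Γ ℝ H) (w : Γ → ℝ) (p : ℝ) (h : H) : H :=
  ∑' γ, scalarS (w γ) p (b.repr h γ) • b γ

noncomputable def Phi {H H' : Type*} [NormedAddCommGroup H] [InnerProductSpace ℝ H]
    [NormedAddCommGroup H'] [InnerProductSpace ℝ H']
    {Γ : Type*} (K : H →L[ℝ] H') (g : H') (b : HilbertBasis Γ ℝ H)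
    (w : Γ → ℝ) (p : ℝ) (f : H) : ℝ≥0∞ :=
  ENNReal.ofReal (‖K f - g‖ ^ 2) + ∑' γ, ENNReal.ofReal (w γ * |b.repr f γ| ^ p)

open scoped RealInnerProductSpace

section Hilbert

variable {H : Type*} [NormedAddCommGroup H] [InnerProductSpace ℝ H] [CompleteSpace H]
  {Γ : Type*} (b : HilbertBasis Γ ℝ H)

lemma norm_rpow_two (x : ℝ) : ‖x‖ ^ (2:ℝ≥0∞).toReal = x ^ 2 := by
  rw [Real.norm_eq_abs, show (2:ℝ≥0∞).toReal = ((2:ℕ):ℝ) by norm_num,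
    Real.rpow_natCast, sq_abs]

lemma repr_summable_sq (f : H) : Summable fun γ => (b.repr f γ) ^ 2 := by
  have := (lp.memℓp (b.repr f)).summable (by norm_num : 0 < (2:ℝ≥0∞).toReal)
  simpa only [norm_rpow_two] using this

lemma norm_sq_eq_tsum (f : H) : ‖f‖ ^ 2 = ∑' γ, (b.repr f γ) ^ 2 := by
  have h1 := lp.norm_rpow_eq_tsum (by norm_num : 0 < (2:ℝ≥0∞).toReal) (b.repr f)
  simp only [norm_rpow_two] at h1
  rw [← h1, b.repr.norm_map f, show (2:ℝ≥0∞).toReal = ((2:ℕ):ℝ) by norm_num,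
    Real.rpow_natCast]

lemma summable_mul_repr (f h : H) : Summable fun γ => b.repr f γ * b.repr h γ := by
  have := lp.summable_inner (𝕜 := ℝ) (b.repr f) (b.repr h)
  simpa [RCLike.inner_apply, starRingEnd_apply, mul_comm] using this

lemma inner_eq_tsum' (f h : H) : ⟪f, h⟫ = ∑' γ, b.repr f γ * b.repr h γ := by
  have h1 := lp.inner_eq_tsum (𝕜 := ℝ) (b.repr f) (b.repr h)
  have h2 := b.repr.inner_map_map f h
  rw [h2] at h1
  simpa [RCLike.inner_apply, starRingEnd_apply, mul_comm] using h1

lemma shrink_repr (w : Γ → ℝ) (p : ℝ) (hw : ∀ γ, 0 ≤ w γ) (hp : 1 ≤ p) (h : H) (γ : Γ) :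
    b.repr (shrinkOp b w p h) γ = scalarS (w γ) p (b.repr h γ) := by
  set s : Γ → ℝ := fun γ => scalarS (w γ) p (b.repr h γ) with hsdef
  have mem : Memℓp s 2 := by
    apply memℓp_gen
    apply Summable.of_nonneg_of_le (fun γ => by positivity)
      (fun γ => ?_) ((lp.memℓp (b.repr h)).summable (by norm_num : 0 < (2:ℝ≥0∞).toReal))
    exact Real.rpow_le_rpow (norm_nonneg _)
      (by simpa [Real.norm_eq_abs] using scalarS_abs_le (hw γ) hp (b.repr h γ))
      (by norm_num)
  have hsum := b.hasSum_repr_symm ⟨s, mem⟩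
  have heq : shrinkOp b w p h = b.repr.symm ⟨s, mem⟩ := by
    rw [shrinkOp]
    exact hsum.tsum_eq
  rw [heq, LinearIsometryEquiv.apply_symm_apply]

end Hilbert

open scoped RealInnerProductSpace in
lemma phi_step
    {H H' : Type*} [NormedAddCommGroup H] [InnerProductSpace ℝ H] [CompleteSpace H]
    [NormedAddCommGroup H'] [InnerProductSpace ℝ H'] [CompleteSpace H']
    {Γ : Type*} (b : HilbertBasis Γ ℝ H)
    (K : H →L[ℝ] H') (hK : ‖K‖ < 1) (g : H')
    (p : ℝ) (hp1 : 1 ≤ p)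
    (w : Γ → ℝ) (hw0 : ∀ γ, 0 ≤ w γ) (a : H) :
    Phi K g b w p (shrinkOp b w p (a + (ContinuousLinearMap.adjoint K) (g - K a))) ≤
      Phi K g b w p a := by
  set h := a + (ContinuousLinearMap.adjoint K) (g - K a) with hh
  set u := shrinkOp b w p h with hu
  have hrepr : ∀ γ, b.repr u γ = scalarS (w γ) p (b.repr h γ) := shrink_repr b w p hw0 hp1 h
  by_cases hfin : (∑' γ, ENNReal.ofReal (w γ * |b.repr a γ| ^ p)) = ⊤
  · conv_rhs => rw [Phi]
    rw [hfin, add_top]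
    exact le_top
  · have hnnA : ∀ γ, 0 ≤ w γ * |b.repr a γ| ^ p :=
      fun γ => mul_nonneg (hw0 γ) (Real.rpow_nonneg (abs_nonneg _) p)
    have hnnU : ∀ γ, 0 ≤ w γ * |b.repr u γ| ^ p :=
      fun γ => mul_nonneg (hw0 γ) (Real.rpow_nonneg (abs_nonneg _) p)
    have SwA : Summable (fun γ => w γ * |b.repr a γ| ^ p) :=
      (ENNReal.summable_toReal hfin).congr
        (fun γ => ENNReal.toReal_ofReal (hnnA γ))
    have key : ∀ γ, (b.repr u γ)^2 - 2*(b.repr u γ)*(b.repr h γ) + w γ * |b.repr u γ|^p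
        ≤ (b.repr a γ)^2 - 2*(b.repr a γ)*(b.repr h γ) + w γ * |b.repr a γ|^p := by
      intro γ
      rw [hrepr γ]
      exact scalarS_min (hw0 γ) hp1 _ _
    have Su2 := repr_summable_sq b u
    have Sa2 := repr_summable_sq b a
    have Sah := summable_mul_repr b a h
    have Suh := summable_mul_repr b u h
    have SwU : Summable (fun γ => w γ * |b.repr u γ| ^ p) := by
      refine Summable.of_nonneg_of_le hnnU (fun γ => ?_)
        (((Sa2.sub Su2).add ((Suh.sub Sah).mul_left 2)).add SwA)
      have := key γ
      dsimp only
      nlinarith [this]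
    have SqU : Summable (fun γ => (b.repr u γ - b.repr h γ)^2) :=
      (repr_summable_sq b (u - h)).congr (fun γ => by simp [map_sub])
    have SqA : Summable (fun γ => (b.repr a γ - b.repr h γ)^2) :=
      (repr_summable_sq b (a - h)).congr (fun γ => by simp [map_sub])
    have key2 : ∀ γ, (b.repr u γ - b.repr h γ)^2 + w γ * |b.repr u γ|^p ≤
        (b.repr a γ - b.repr h γ)^2 + w γ * |b.repr a γ|^p := by
      intro γ
      nlinarith [key γ]
    have T1 := Summable.tsum_le_tsum key2 (SqU.add SwU) (SqA.add SwA)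
    rw [Summable.tsum_add SqU SwU, Summable.tsum_add SqA SwA] at T1
    have Pu : (∑' γ, (b.repr u γ - b.repr h γ)^2) = ‖u - h‖^2 := by
      rw [norm_sq_eq_tsum b (u - h)]
      exact tsum_congr (fun γ => by simp [map_sub])
    have Pa : (∑' γ, (b.repr a γ - b.repr h γ)^2) = ‖a - h‖^2 := by
      rw [norm_sq_eq_tsum b (a - h)]
      exact tsum_congr (fun γ => by simp [map_sub])
    rw [Pu, Pa] at T1
    have hadj : a - h = (ContinuousLinearMap.adjoint K) (K a - g) := by
      have : a - h = -((ContinuousLinearMap.adjoint K) (g - K a)) := by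
        rw [hh]; abel
      rw [this, ← map_neg, neg_sub]
    have e3 : ⟪K (u - a), K a - g⟫ = ⟪u - a, a - h⟫ := by
      rw [hadj, ContinuousLinearMap.adjoint_inner_right]
    have hid : ‖K u - g‖^2 + ‖u - a‖^2 - ‖K (u - a)‖^2
        = ‖K a - g‖^2 + ‖u - h‖^2 - ‖a - h‖^2 := by
      have e1 : K u - g = K (u - a) + (K a - g) := by rw [map_sub]; abel
      have e2 : u - h = (u - a) + (a - h) := by abel
      rw [e1, e2, norm_add_sq_real, norm_add_sq_real, e3]
      ring
    have hKle : ‖K (u - a)‖^2 ≤ ‖u - a‖^2 := by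
      have h1 : ‖K (u - a)‖ ≤ ‖K‖ * ‖u - a‖ := K.le_opNorm _
      have h2 : ‖K‖ * ‖u - a‖ ≤ 1 * ‖u - a‖ :=
        mul_le_mul_of_nonneg_right hK.le (norm_nonneg _)
      nlinarith [norm_nonneg (K (u - a)), norm_nonneg (u - a)]
    have main : ‖K u - g‖^2 + ∑' γ, w γ * |b.repr u γ|^p
        ≤ ‖K a - g‖^2 + ∑' γ, w γ * |b.repr a γ|^p := by
      linarith
    rw [Phi, Phi, ← ENNReal.ofReal_tsum_of_nonneg hnnU SwU,
      ← ENNReal.ofReal_tsum_of_nonneg hnnA SwA,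
      ← ENNReal.ofReal_add (by positivity) (tsum_nonneg hnnU),
      ← ENNReal.ofReal_add (by positivity) (tsum_nonneg hnnA)]
    exact ENNReal.ofReal_le_ofReal main

lemma tsum_rpow_le_rpow_tsum {ι : Type*} (a : ι → ℝ≥0∞) {q : ℝ} (hq : 1 ≤ q) :
    ∑' i, a i ^ q ≤ (∑' i, a i) ^ q := by
  have hq0 : 0 < q := lt_of_lt_of_le one_pos hq
  set A := ∑' i, a i with hA
  rcases eq_or_ne A 0 with h0 | h0
  · have hz : ∀ i, a i = 0 := by
      intro i
      exact le_antisymm (h0 ▸ ENNReal.le_tsum i) zero_le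
    simp only [fun i => hz i]
    rw [ENNReal.zero_rpow_of_pos hq0]
    simp
  rcases eq_or_ne A ⊤ with ht | ht
  · rw [ht, ENNReal.top_rpow_of_pos hq0]
    exact le_top
  · have step : ∀ i, a i ^ q ≤ A ^ (q - 1) * a i := by
      intro i
      have h1 : a i ^ q = a i ^ (q - 1) * a i := by
        have h2 : a i ^ (q - 1) * a i = a i ^ (q - 1 + 1) := by
          rw [ENNReal.rpow_add_of_nonneg _ _ (by linarith) zero_le_one, ENNReal.rpow_one]
        rw [h2]
        norm_num
      rw [h1]
      exact mul_le_mul_left (ENNReal.rpow_le_rpow (ENNReal.le_tsum i) (by linarith)) _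
    calc ∑' i, a i ^ q ≤ ∑' i, A ^ (q - 1) * a i := ENNReal.tsum_le_tsum step
      _ = A ^ (q - 1) * A := by rw [ENNReal.tsum_mul_left]
      _ = A ^ q := by
          have h2 : A ^ (q - 1) * A = A ^ (q - 1 + 1) := by
            rw [ENNReal.rpow_add _ _ h0 ht, ENNReal.rpow_one]
          rw [h2]
          norm_num

lemma phi_bound
    {H H' : Type*} [NormedAddCommGroup H] [InnerProductSpace ℝ H] [CompleteSpace H]
    [NormedAddCommGroup H'] [InnerProductSpace ℝ H'] [CompleteSpace H']
    {Γ : Type*} (b : HilbertBasis Γ ℝ H)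
    (K : H →L[ℝ] H') (g : H')
    (p : ℝ) (hp1 : 1 ≤ p) (hp2 : p ≤ 2)
    (w : Γ → ℝ) (c : ℝ) (hc : 0 < c) (hw : ∀ γ, c ≤ w γ) (v : H) :
    ENNReal.ofReal (‖v‖ ^ 2) ≤
      ENNReal.ofReal (c ^ (-(2 / p))) * (Phi K g b w p v) ^ (2 / p) := by
  have hp0 : 0 < p := lt_of_lt_of_le one_pos hp1
  have hq1 : 1 ≤ 2 / p := by rw [le_div_iff₀ hp0]; linarith
  have hq0 : 0 ≤ 2 / p := by positivity
  set T := ∑' γ, ENNReal.ofReal (|b.repr v γ| ^ p) with hT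
  have h1 : ENNReal.ofReal (‖v‖ ^ 2) = ∑' γ, ENNReal.ofReal ((b.repr v γ) ^ 2) := by
    rw [norm_sq_eq_tsum b v,
      ENNReal.ofReal_tsum_of_nonneg (fun γ => sq_nonneg _) (repr_summable_sq b v)]
  have h2 : ∀ γ : Γ, ENNReal.ofReal ((b.repr v γ) ^ 2)
      = (ENNReal.ofReal (|b.repr v γ| ^ p)) ^ (2 / p) := by
    intro γ
    rw [ENNReal.ofReal_rpow_of_nonneg (Real.rpow_nonneg (abs_nonneg _) p) hq0]
    congr 1
    rw [← Real.rpow_mul (abs_nonneg _), show p * (2 / p) = ((2:ℕ):ℝ) by field_simp; norm_num,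
      Real.rpow_natCast, sq_abs]
  have h3 : ENNReal.ofReal (‖v‖ ^ 2) ≤ T ^ (2 / p) := by
    rw [h1, tsum_congr h2]
    exact tsum_rpow_le_rpow_tsum _ hq1
  have h4 : ENNReal.ofReal c * T ≤ Phi K g b w p v := by
    have he : ENNReal.ofReal c * T = ∑' γ, ENNReal.ofReal (c * |b.repr v γ| ^ p) := by
      rw [hT, ← ENNReal.tsum_mul_left]
      exact tsum_congr (fun γ => (ENNReal.ofReal_mul hc.le).symm)
    rw [he, Phi]
    calc (∑' γ, ENNReal.ofReal (c * |b.repr v γ| ^ p))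
        ≤ ∑' γ, ENNReal.ofReal (w γ * |b.repr v γ| ^ p) :=
          ENNReal.tsum_le_tsum (fun γ => ENNReal.ofReal_le_ofReal
            (mul_le_mul_of_nonneg_right (hw γ) (Real.rpow_nonneg (abs_nonneg _) p)))
      _ ≤ _ := le_add_self
  have hc0 : ENNReal.ofReal c ≠ 0 := (ENNReal.ofReal_pos.mpr hc).ne'
  have hcT : ENNReal.ofReal c ≠ ⊤ := ENNReal.ofReal_ne_top
  have h5 : T ≤ (ENNReal.ofReal c)⁻¹ * Phi K g b w p v := by
    rw [← one_mul T, ← ENNReal.inv_mul_cancel hc0 hcT, mul_assoc]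
    exact mul_le_mul_right h4 _
  calc ENNReal.ofReal (‖v‖ ^ 2) ≤ T ^ (2 / p) := h3
    _ ≤ ((ENNReal.ofReal c)⁻¹ * Phi K g b w p v) ^ (2 / p) := ENNReal.rpow_le_rpow h5 hq0
    _ = ((ENNReal.ofReal c)⁻¹) ^ (2 / p) * (Phi K g b w p v) ^ (2 / p) :=
        ENNReal.mul_rpow_of_nonneg _ _ hq0
    _ = ENNReal.ofReal (c ^ (-(2 / p))) * (Phi K g b w p v) ^ (2 / p) := by
        rw [ENNReal.inv_rpow, ← ENNReal.rpow_neg, ENNReal.ofReal_rpow_of_pos hc]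

/-- The iterates of the thresholded Landweber algorithm are uniformly bounded:
`‖fⁿ‖² ≤ c^(−2/p) · Φ(f⁰)^(2/p)`. -/
theorem iterates_uniformly_bounded
    {H H' : Type*} [NormedAddCommGroup H] [InnerProductSpace ℝ H] [CompleteSpace H]
    [NormedAddCommGroup H'] [InnerProductSpace ℝ H'] [CompleteSpace H']
    {Γ : Type*} (b : HilbertBasis Γ ℝ H)
    (K : H →L[ℝ] H') (hK : ‖K‖ < 1) (g : H')
    (p : ℝ) (hp1 : 1 ≤ p) (hp2 : p ≤ 2)
    (w : Γ → ℝ) (c : ℝ) (hc : 0 < c) (hw : ∀ γ, c ≤ w γ)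
    (f : ℕ → H)
    (hf : ∀ n, f (n + 1) =
        shrinkOp b w p (f n + (ContinuousLinearMap.adjoint K) (g - K (f n)))) :
    ∀ n, ENNReal.ofReal (‖f n‖ ^ 2) ≤
        ENNReal.ofReal (c ^ (-(2 / p))) * (Phi K g b w p (f 0)) ^ (2 / p) := by
  have hw0 : ∀ γ, 0 ≤ w γ := fun γ => hc.le.trans (hw γ)
  have hq0 : 0 ≤ 2 / p := by positivity
  have mono : ∀ n, Phi K g b w p (f n) ≤ Phi K g b w p (f 0) := by
    intro n
    induction n with
    | zero => exact le_refl _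
    | succ k ih =>
        rw [hf k]
        exact (phi_step b K hK g p hp1 w hw0 (f k)).trans ih
  intro n
  calc ENNReal.ofReal (‖f n‖ ^ 2)
      ≤ ENNReal.ofReal (c ^ (-(2 / p))) * (Phi K g b w p (f n)) ^ (2 / p) :=
        phi_bound b K g p hp1 hp2 w c hc hw (f n)
    _ ≤ ENNReal.ofReal (c ^ (-(2 / p))) * (Phi K g b w p (f 0)) ^ (2 / p) :=
        mul_le_mul_right (ENNReal.rpow_le_rpow (mono n) hq0) _
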